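/- arXiv:1604.01128 — 3 statements merged into one kernel-verified Lean document; each statement's English description precedes it below -/
import Mathlib

section
/- The function φ1 is three times continuously differentiable on [0,L] and satisfies the boundary value problem: φ1'(x) + φ1'''(x) = -q·φ2(x) for all x ∈ [0,L], together with the boundary conditions φ1(0) = φ1(L) = 0 and φ1'(0) = φ1'(L) = 0. -/
noncomputable def L : ℝ := 2 * Real.pi * Real.sqrt (7 / 3)

noncomputable def q : ℝ := 20 / (21 * Real.sqrt 21)

noncomputable def Θ : ℝ := (1 / Real.sqrt (14 * Real.pi)) * (3 / 7 : ℝ) ^ ((1 : ℝ) / 4)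

noncomputable def φ1 (x : ℝ) : ℝ :=
  Θ * (Real.cos (5 * x / Real.sqrt 21) - 3 * Real.cos (x / Real.sqrt 21)
      + 2 * Real.cos (4 * x / Real.sqrt 21))

noncomputable def φ2 (x : ℝ) : ℝ :=
  Θ * (-Real.sin (5 * x / Real.sqrt 21) - 3 * Real.sin (x / Real.sqrt 21)
      + 2 * Real.sin (4 * x / Real.sqrt 21))

/-!
The operator `f ↦ f' + f'''` sends the mode `cos (ω x)` to `(ω³ - ω) sin (ω x)`, and
for `ω = k / √21` the symbol `ω³ - ω = k (k² - 21) / (21 √21)` equals `q` for `k = 5` and `-q`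
for `k = 1, 4`; this turns `φ1` into `-q φ2`. At the endpoint the phase is `θ = L / √21 = 2π / 3`,
so `4θ ≡ θ` and `5θ ≡ -θ` modulo `2π`, and the boundary values reduce to the coefficient
identities `1 - 3 + 2 = 0` and `-5 - 3 + 8 = 0`.
-/

open Real

noncomputable def linearKdV (f : ℝ → ℝ) (x : ℝ) : ℝ := deriv f x + iteratedDeriv 3 f x

lemma linearKdV_add {f g : ℝ → ℝ} {x : ℝ} (hf : ContDiffAt ℝ 3 f x)
    (hg : ContDiffAt ℝ 3 g x) :
    linearKdV (fun y => f y + g y) x = linearKdV f x + linearKdV g x := by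
  simp only [linearKdV, deriv_fun_add (hf.differentiableAt (by norm_num))
    (hg.differentiableAt (by norm_num)), iteratedDeriv_fun_add hf hg]
  ring

lemma linearKdV_const_mul (c : ℝ) (f : ℝ → ℝ) (x : ℝ) :
    linearKdV (fun y => c * f y) x = c * linearKdV f x := by
  simp only [linearKdV, deriv_const_mul_field', iteratedDeriv_const_mul_field]
  ring

lemma linearKdV_cos_const_mul (ω x : ℝ) :
    linearKdV (fun y => cos (ω * y)) x = (ω ^ 3 - ω) * sin (ω * x) := by
  rw [linearKdV, ← iteratedDeriv_one, iteratedDeriv_comp_const_mul contDiff_cos,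
    iteratedDeriv_comp_const_mul contDiff_cos]
  simp only [pow_one, iteratedDeriv_succ, iteratedDeriv_zero, deriv_cos', mul_neg,
    deriv.fun_neg', Real.deriv_sin]
  ring

lemma hasDerivAt_cos_const_mul (ω x : ℝ) :
    HasDerivAt (fun y => cos (ω * y)) (-ω * sin (ω * x)) x := by
  simpa [mul_comm] using ((hasDerivAt_id x).const_mul ω).cos

lemma div_sqrt_21_pow_three_sub (k : ℝ) :
    (k / √21) ^ 3 - k / √21 = k * (k ^ 2 - 21) / 20 * q := by
  have h : √21 ^ 2 = 21 := sq_sqrt (by norm_num)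
  rw [q]
  field_simp
  rw [h]
  ring

lemma φ1_eq : φ1 = fun x => Θ * cos (5 / √21 * x) + (-3 * Θ) * cos (1 / √21 * x)
    + (2 * Θ) * cos (4 / √21 * x) := by
  funext x
  simp only [φ1, div_mul_eq_mul_div, one_mul]
  ring

lemma linearKdV_φ1 (x : ℝ) : linearKdV φ1 x = -q * φ2 x := by
  rw [φ1_eq, linearKdV_add (by fun_prop) (by fun_prop),
    linearKdV_add (by fun_prop) (by fun_prop),
    linearKdV_const_mul, linearKdV_const_mul, linearKdV_const_mul, linearKdV_cos_const_mul,
    linearKdV_cos_const_mul, linearKdV_cos_const_mul, div_sqrt_21_pow_three_sub,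
    div_sqrt_21_pow_three_sub, div_sqrt_21_pow_three_sub, φ2]
  simp only [div_mul_eq_mul_div, one_mul]
  ring

lemma deriv_φ1 (x : ℝ) : deriv φ1 x = -(Θ / √21) *
    (5 * sin (5 / √21 * x) - 3 * sin (1 / √21 * x) + 8 * sin (4 / √21 * x)) := by
  rw [φ1_eq, ((((hasDerivAt_cos_const_mul _ x).const_mul _).fun_add
    ((hasDerivAt_cos_const_mul _ x).const_mul _)).fun_add
    ((hasDerivAt_cos_const_mul _ x).const_mul _)).deriv]
  ring

lemma three_mul_L_div_sqrt_21 : 3 * (L / √21) = 2 * π := by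
  have h : √(7 / 3) / √21 = 1 / 3 := by
    rw [← sqrt_div (by norm_num), show (7 : ℝ) / 3 / 21 = (1 / 3) ^ 2 by norm_num,
      sqrt_sq (by norm_num)]
  rw [L, mul_div_assoc, h]
  ring

lemma cos_four_mul_of_three_mul_eq_two_pi {θ : ℝ} (h : 3 * θ = 2 * π) :
    cos (4 * θ) = cos θ := by
  rw [show 4 * θ = θ + 2 * π by linarith, cos_add_two_pi]

lemma sin_four_mul_of_three_mul_eq_two_pi {θ : ℝ} (h : 3 * θ = 2 * π) :
    sin (4 * θ) = sin θ := by
  rw [show 4 * θ = θ + 2 * π by linarith, sin_add_two_pi]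

lemma cos_five_mul_of_three_mul_eq_two_pi {θ : ℝ} (h : 3 * θ = 2 * π) :
    cos (5 * θ) = cos θ := by
  rw [show 5 * θ = -θ + 2 * π + 2 * π by linarith, cos_add_two_pi, cos_add_two_pi, cos_neg]

lemma sin_five_mul_of_three_mul_eq_two_pi {θ : ℝ} (h : 3 * θ = 2 * π) :
    sin (5 * θ) = -sin θ := by
  rw [show 5 * θ = -θ + 2 * π + 2 * π by linarith, sin_add_two_pi, sin_add_two_pi, sin_neg]

lemma φ1_L : φ1 L = 0 := by
  rw [φ1, mul_div_assoc, mul_div_assoc,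
    cos_four_mul_of_three_mul_eq_two_pi three_mul_L_div_sqrt_21,
    cos_five_mul_of_three_mul_eq_two_pi three_mul_L_div_sqrt_21]
  ring

lemma deriv_φ1_L : deriv φ1 L = 0 := by
  simp only [deriv_φ1, div_mul_eq_mul_div, one_mul]
  rw [mul_div_assoc, mul_div_assoc,
    sin_four_mul_of_three_mul_eq_two_pi three_mul_L_div_sqrt_21,
    sin_five_mul_of_three_mul_eq_two_pi three_mul_L_div_sqrt_21]
  ring

/-- φ1 is C³ on [0,L] and satisfies φ1' + φ1''' = -q·φ2 on [0,L],
with boundary conditions φ1(0) = φ1(L) = 0 and φ1'(0) = φ1'(L) = 0. -/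
theorem stmt_0 :
    ContDiffOn ℝ 3 φ1 (Set.Icc 0 L) ∧
    (∀ x ∈ Set.Icc (0 : ℝ) L, deriv φ1 x + iteratedDeriv 3 φ1 x = -q * φ2 x) ∧
    φ1 0 = 0 ∧ φ1 L = 0 ∧ deriv φ1 0 = 0 ∧ deriv φ1 L = 0 := by
  refine ⟨?_, fun x _ => linearKdV_φ1 x, ?_, φ1_L, ?_, deriv_φ1_L⟩
  · rw [φ1_eq]
    fun_prop
  · norm_num [φ1]
  · norm_num [deriv_φ1]
end

section
/- The complex-valued function φ := φ1 − i·φ2 on [0,L] is not identically zero, satisfies φ(0) = φ(L) = 0 and φ'(L) = 0, and satisfies −(φ'(x) + φ'''(x)) = (i·q)·φ(x) for all x ∈ [0,L]; likewise ψ := φ1 + i·φ2 is nonzero, satisfies the same boundary conditions, and satisfies −(ψ'(x) + ψ'''(x)) = (−i·q)·ψ(x) for all x ∈ [0,L]. In other words, ±i·q are eigenvalues of the operator φ ↦ −φ' − φ''' with these boundary conditions, with eigenfunctions φ1 ∓ i·φ2. -/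
noncomputable def φc (x : ℝ) : ℂ := (φ1 x : ℂ) - Complex.I * (φ2 x : ℂ)

noncomputable def ψc (x : ℝ) : ℂ := (φ1 x : ℂ) + Complex.I * (φ2 x : ℂ)

open Complex ComplexConjugate
open scoped Real

noncomputable def expSum {ι : Type*} [Fintype ι] (c z : ι → ℂ) (x : ℝ) : ℂ :=
  ∑ i, c i * exp (z i * x)

section ExpSum

variable {ι : Type*} [Fintype ι] (c z : ι → ℂ)

theorem hasDerivAt_expSum (x : ℝ) :
    HasDerivAt (expSum c z) (expSum (fun i => c i * z i) z x) x := by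
  refine HasDerivAt.fun_sum fun i _ => ?_
  have h := ((hasDerivAt_id x).ofReal_comp.const_mul (z i)).cexp.const_mul (c i)
  exact h.congr_deriv (by simp only [id_eq, ofReal_one, mul_one]; ring)

theorem deriv_expSum : deriv (expSum c z) = expSum (fun i => c i * z i) z :=
  funext fun x => (hasDerivAt_expSum c z x).deriv

theorem iteratedDeriv_expSum (n : ℕ) :
    iteratedDeriv n (expSum c z) = expSum (fun i => c i * z i ^ n) z := by
  induction n with
  | zero => simp
  | succ n ih => simp only [iteratedDeriv_succ, ih, deriv_expSum, pow_succ, mul_assoc]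

theorem expSum_zero : expSum c z 0 = ∑ i, c i := by
  simp [expSum]

theorem expSum_eq_mul_sum {x : ℝ} {E : ℂ} (hE : ∀ i, exp (z i * x) = E) :
    expSum c z x = E * ∑ i, c i := by
  simp [expSum, hE, Finset.mul_sum, mul_comm]

theorem conj_expSum (x : ℝ) :
    conj (expSum c z x) = expSum (fun i => conj (c i)) (fun i => conj (z i)) x := by
  simp [expSum, map_sum, ← exp_conj]

theorem neg_deriv_add_iteratedDeriv_three_expSum {μ : ℂ} (hz : ∀ i, -(z i + z i ^ 3) = μ)
    (x : ℝ) :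
    -(deriv (expSum c z) x + iteratedDeriv 3 (expSum c z) x) = μ * expSum c z x := by
  simp only [deriv_expSum, iteratedDeriv_expSum, expSum, ← Finset.sum_add_distrib,
    ← Finset.sum_neg_distrib, Finset.mul_sum]
  exact Finset.sum_congr rfl fun i _ => by rw [← hz i]; ring

end ExpSum

noncomputable def modeWeight : Fin 3 → ℂ := ![Θ, -3 * Θ, 2 * Θ]

def modeFreq (ω : ℂ) : Fin 3 → ℂ := ![5 * ω, -ω, -4 * ω]

noncomputable def mode (ω : ℂ) : ℝ → ℂ := expSum modeWeight (modeFreq ω)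

theorem sum_modeWeight : ∑ i, modeWeight i = 0 := by
  simp only [modeWeight, Fin.sum_univ_three, Matrix.cons_val_zero, Matrix.cons_val_one,
    Matrix.cons_val]
  ring

theorem sum_modeWeight_mul_modeFreq (ω : ℂ) : ∑ i, modeWeight i * modeFreq ω i = 0 := by
  simp only [modeWeight, modeFreq, Fin.sum_univ_three, Matrix.cons_val_zero,
    Matrix.cons_val_one, Matrix.cons_val]
  ring

theorem exp_modeFreq_mul {ω : ℂ} {x : ℝ} (hω : exp (3 * ω * x) = 1) (i : Fin 3) :
    exp (modeFreq ω i * x) = exp (-ω * x) := by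
  fin_cases i
  · calc exp (5 * ω * x) = exp (-ω * x) * exp (3 * ω * x) ^ 2 := by
          rw [← exp_nat_mul, ← exp_add]; ring_nf
      _ = exp (-ω * x) := by rw [hω]; ring
  · rfl
  · calc exp (-4 * ω * x) = exp (-ω * x) * (exp (3 * ω * x))⁻¹ := by
          rw [← exp_neg, ← exp_add]; ring_nf
      _ = exp (-ω * x) := by rw [hω]; ring

theorem neg_add_cube_eq_of_root {k ω : ℂ} (hk : k ^ 3 - 21 * k = 20) (hω : ω ^ 2 = -1 / 21) :
    -(k * ω + (k * ω) ^ 3) = 20 / 21 * ω := by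
  linear_combination ω / 21 * hk - k ^ 3 * ω * hω

theorem neg_modeFreq_add_cube {ω : ℂ} (hω : ω ^ 2 = -1 / 21) (i : Fin 3) :
    -(modeFreq ω i + modeFreq ω i ^ 3) = 20 / 21 * ω := by
  fin_cases i
  · exact neg_add_cube_eq_of_root (by norm_num) hω
  · show -(-ω + (-ω) ^ 3) = _
    simpa using neg_add_cube_eq_of_root (k := -1) (by norm_num) hω
  · exact neg_add_cube_eq_of_root (by norm_num) hω

theorem mode_isEigenfunction {ω μ : ℂ} (hω : ω ^ 2 = -1 / 21) (hωL : exp (3 * ω * L) = 1)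
    (hμ : 20 / 21 * ω = μ) :
    mode ω 0 = 0 ∧ mode ω L = 0 ∧ deriv (mode ω) L = 0 ∧
      ∀ x, -(deriv (mode ω) x + iteratedDeriv 3 (mode ω) x) = μ * mode ω x := by
  refine ⟨?_, ?_, ?_, ?_⟩
  · rw [mode, expSum_zero, sum_modeWeight]
  · rw [mode, expSum_eq_mul_sum _ _ (exp_modeFreq_mul hωL), sum_modeWeight, mul_zero]
  · rw [mode, deriv_expSum, expSum_eq_mul_sum _ _ (exp_modeFreq_mul hωL),
      sum_modeWeight_mul_modeFreq, mul_zero]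
  · exact hμ ▸ neg_deriv_add_iteratedDeriv_three_expSum _ _ (neg_modeFreq_add_cube hω)

theorem conj_mode (ω : ℂ) (x : ℝ) : conj (mode ω x) = mode (conj ω) x := by
  rw [mode, conj_expSum, mode]
  congr 1 <;> funext i <;> fin_cases i <;> simp [modeWeight, modeFreq, map_ofNat]

theorem φc_eq_mode : φc = mode (I / √21) := by
  funext x
  have euler (k : ℝ) :
      exp (k * (I / √21) * x) = Real.cos (k * x / √21) + Real.sin (k * x / √21) * I := by
    rw [ofReal_cos, ofReal_sin, ← exp_mul_I]; push_cast; ring_nf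
  calc φc x = Θ * exp ((5 : ℝ) * (I / √21) * x) + -3 * Θ * exp ((-1 : ℝ) * (I / √21) * x)
        + 2 * Θ * exp ((-4 : ℝ) * (I / √21) * x) := by
        rw [euler, euler, euler]
        simp only [φc, φ1, φ2, neg_mul, one_mul, neg_div, Real.cos_neg, Real.sin_neg]
        push_cast; ring
    _ = mode (I / √21) x := by
        simp [mode, expSum, modeWeight, modeFreq, Fin.sum_univ_three]

theorem ψc_eq_conj_φc (x : ℝ) : ψc x = conj (φc x) := by
  simp [ψc, φc]

theorem ψc_eq_mode : ψc = mode (-(I / √21)) := by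
  funext x
  rw [ψc_eq_conj_φc, φc_eq_mode, conj_mode]
  simp [map_div₀, neg_div]

theorem sq_I_div_sqrt : (I / √21) ^ 2 = -1 / 21 := by
  rw [div_pow, I_sq, ← ofReal_pow, Real.sq_sqrt (by norm_num)]
  push_cast; ring

theorem sqrt_21_eq : √21 = 3 * √(7 / 3) := by
  rw [show (21 : ℝ) = 3 ^ 2 * (7 / 3) by norm_num, Real.sqrt_mul (by norm_num),
    Real.sqrt_sq (by norm_num)]

theorem exp_three_mul_I_div_sqrt_mul_L : exp (3 * (I / √21) * L) = 1 := by
  have hs : √(7 / 3) ≠ 0 := by positivity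
  rw [L, sqrt_21_eq]
  convert exp_two_pi_mul_I using 2
  push_cast
  field_simp

theorem eigenvalue_eq_I_mul_q : 20 / 21 * (I / √21) = I * q := by
  rw [q]; push_cast; ring

theorem φ2_sqrt_mul_pi_div_two : φ2 (√21 * π / 2) = -4 * Θ := by
  have hs : √21 ≠ 0 := by positivity
  have h5 : 5 * (√21 * π / 2) / √21 = π / 2 + 2 * π := by field_simp; ring
  have h1 : √21 * π / 2 / √21 = π / 2 := by field_simp
  have h4 : 4 * (√21 * π / 2) / √21 = 2 * π := by field_simp; ring
  rw [φ2, h5, h1, h4, Real.sin_add_two_pi, Real.sin_pi_div_two, Real.sin_two_pi]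
  ring

theorem sqrt_mul_pi_div_two_mem_Icc : √21 * π / 2 ∈ Set.Icc 0 L := by
  refine ⟨by positivity, ?_⟩
  rw [L, sqrt_21_eq]
  nlinarith [Real.pi_pos, Real.sqrt_pos.2 (show (0 : ℝ) < 7 / 3 by norm_num)]

theorem φc_sqrt_mul_pi_div_two_ne_zero : φc (√21 * π / 2) ≠ 0 := by
  intro h
  have him := congrArg im h
  have hΘ : 0 < Θ := by unfold Θ; positivity
  simp only [φc, sub_im, ofReal_im, mul_im, I_re, I_im, ofReal_re, zero_im,
    φ2_sqrt_mul_pi_div_two] at him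
  linarith

/-- ±i·q are eigenvalues of φ ↦ −φ' − φ''' with the boundary conditions
φ(0) = φ(L) = 0, φ'(L) = 0, with eigenfunctions φ1 ∓ i·φ2. -/
theorem stmt_2 :
    (∃ x ∈ Set.Icc (0 : ℝ) L, φc x ≠ 0) ∧
    φc 0 = 0 ∧ φc L = 0 ∧ deriv φc L = 0 ∧
    (∀ x ∈ Set.Icc (0 : ℝ) L,
      -(deriv φc x + iteratedDeriv 3 φc x) = (Complex.I * (q : ℂ)) * φc x) ∧
    (∃ x ∈ Set.Icc (0 : ℝ) L, ψc x ≠ 0) ∧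
    ψc 0 = 0 ∧ ψc L = 0 ∧ deriv ψc L = 0 ∧
    (∀ x ∈ Set.Icc (0 : ℝ) L,
      -(deriv ψc x + iteratedDeriv 3 ψc x) = (-Complex.I * (q : ℂ)) * ψc x) := by
  have hψ : ψc (√21 * π / 2) ≠ 0 := by
    rw [ψc_eq_conj_φc, map_ne_zero]; exact φc_sqrt_mul_pi_div_two_ne_zero
  obtain ⟨hφ0, hφL, hφ'L, hφeq⟩ :=
    mode_isEigenfunction sq_I_div_sqrt exp_three_mul_I_div_sqrt_mul_L eigenvalue_eq_I_mul_q
  obtain ⟨hψ0, hψL, hψ'L, hψeq⟩ := mode_isEigenfunction (ω := -(I / √21)) (μ := -I * q)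
    (by rw [neg_sq, sq_I_div_sqrt])
    (by rw [mul_neg, neg_mul, exp_neg, exp_three_mul_I_div_sqrt_mul_L, inv_one])
    (by rw [mul_neg, eigenvalue_eq_I_mul_q, neg_mul])
  rw [← φc_eq_mode] at hφ0 hφL hφ'L hφeq
  rw [← ψc_eq_mode] at hψ0 hψL hψ'L hψeq
  exact ⟨⟨_, sqrt_mul_pi_div_two_mem_Icc, φc_sqrt_mul_pi_div_two_ne_zero⟩, hφ0, hφL, hφ'L,
    fun x _ => hφeq x, ⟨_, sqrt_mul_pi_div_two_mem_Icc, hψ⟩, hψ0, hψL, hψ'L, fun x _ => hψeq x⟩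
end

section
/- Let λ ∈ ℂ and let φ : [0,L] → ℂ be a three times continuously differentiable function, not identically zero, satisfying −(φ'(x) + φ'''(x)) = λ·φ(x) for all x ∈ [0,L] together with the boundary conditions φ(0) = φ(L) = 0 and φ'(L) = 0. Then Re(λ)·∫₀^L |φ(x)|² dx = −(1/2)·|φ'(0)|², and in particular Re(λ) ≤ 0. -/
open Set intervalIntegral
open scoped InnerProductSpace

theorem integral_eq_sub_of_hasDerivWithinAt_Icc {F : Type*} [NormedAddCommGroup F]
    [NormedSpace ℝ F] [CompleteSpace F] {a b : ℝ} {f f' : ℝ → F} (hab : a ≤ b)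
    (hf : ∀ x ∈ Icc a b, HasDerivWithinAt f (f' x) (Icc a b) x)
    (hf' : ContinuousOn f' (Icc a b)) :
    ∫ x in a..b, f' x = f b - f a :=
  integral_eq_sub_of_hasDerivAt_of_le hab (fun x hx => (hf x hx).continuousWithinAt)
    (fun x hx => (hf x (Ioo_subset_Icc_self hx)).hasDerivAt (Icc_mem_nhds hx.1 hx.2))
    (hf'.intervalIntegrable_of_Icc hab)

section InnerProduct

variable {E : Type*} [NormedAddCommGroup E] [InnerProductSpace ℝ E] {a b : ℝ}
  {f g f' g' : ℝ → E}

theorem integral_inner_deriv_add_inner_deriv (hab : a ≤ b)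
    (hf : ∀ x ∈ Icc a b, HasDerivWithinAt f (f' x) (Icc a b) x)
    (hg : ∀ x ∈ Icc a b, HasDerivWithinAt g (g' x) (Icc a b) x)
    (hf' : ContinuousOn f' (Icc a b)) (hg' : ContinuousOn g' (Icc a b)) :
    ∫ x in a..b, (⟪f x, g' x⟫_ℝ + ⟪f' x, g x⟫_ℝ) = ⟪f b, g b⟫_ℝ - ⟪f a, g a⟫_ℝ := by
  have hfc : ContinuousOn f (Icc a b) := fun x hx => (hf x hx).continuousWithinAt
  have hgc : ContinuousOn g (Icc a b) := fun x hx => (hg x hx).continuousWithinAt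
  exact integral_eq_sub_of_hasDerivWithinAt_Icc hab (fun x hx => (hf x hx).inner ℝ (hg x hx))
    ((hfc.inner hg').add (hf'.inner hgc))

theorem integral_inner_deriv_right (hab : a ≤ b)
    (hf : ∀ x ∈ Icc a b, HasDerivWithinAt f (f' x) (Icc a b) x)
    (hg : ∀ x ∈ Icc a b, HasDerivWithinAt g (g' x) (Icc a b) x)
    (hf' : ContinuousOn f' (Icc a b)) (hg' : ContinuousOn g' (Icc a b)) :
    ∫ x in a..b, ⟪f x, g' x⟫_ℝ =
      ⟪f b, g b⟫_ℝ - ⟪f a, g a⟫_ℝ - ∫ x in a..b, ⟪f' x, g x⟫_ℝ := by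
  have hfc : ContinuousOn f (Icc a b) := fun x hx => (hf x hx).continuousWithinAt
  have hgc : ContinuousOn g (Icc a b) := fun x hx => (hg x hx).continuousWithinAt
  rw [← integral_inner_deriv_add_inner_deriv hab hf hg hf' hg',
    integral_add ((hfc.inner hg').intervalIntegrable_of_Icc hab)
      ((hf'.inner hgc).intervalIntegrable_of_Icc hab), add_sub_cancel_right]

theorem integral_inner_self_deriv (hab : a ≤ b)
    (hf : ∀ x ∈ Icc a b, HasDerivWithinAt f (f' x) (Icc a b) x)
    (hf' : ContinuousOn f' (Icc a b)) :
    ∫ x in a..b, ⟪f x, f' x⟫_ℝ = (‖f b‖ ^ 2 - ‖f a‖ ^ 2) / 2 := by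
  have h := integral_inner_deriv_right hab hf hf hf' hf'
  simp only [real_inner_self_eq_norm_sq, real_inner_comm (f _)] at h
  linarith

theorem integral_inner_deriv_add_third_deriv {u u₁ u₂ u₃ : ℝ → E} (hab : a ≤ b)
    (hu : ∀ x ∈ Icc a b, HasDerivWithinAt u (u₁ x) (Icc a b) x)
    (hu₁ : ∀ x ∈ Icc a b, HasDerivWithinAt u₁ (u₂ x) (Icc a b) x)
    (hu₂ : ∀ x ∈ Icc a b, HasDerivWithinAt u₂ (u₃ x) (Icc a b) x)
    (hu₃ : ContinuousOn u₃ (Icc a b)) :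
    ∫ x in a..b, ⟪u x, u₁ x + u₃ x⟫_ℝ
      = (‖u b‖ ^ 2 - ‖u a‖ ^ 2) / 2 + (⟪u b, u₂ b⟫_ℝ - ⟪u a, u₂ a⟫_ℝ)
        - (‖u₁ b‖ ^ 2 - ‖u₁ a‖ ^ 2) / 2 := by
  have hu₂c : ContinuousOn u₂ (Icc a b) := fun x hx => (hu₂ x hx).continuousWithinAt
  have hu₁c : ContinuousOn u₁ (Icc a b) := fun x hx => (hu₁ x hx).continuousWithinAt
  have huc : ContinuousOn u (Icc a b) := fun x hx => (hu x hx).continuousWithinAt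
  simp only [inner_add_right]
  rw [integral_add ((huc.inner hu₁c).intervalIntegrable_of_Icc hab)
      ((huc.inner hu₃).intervalIntegrable_of_Icc hab),
    integral_inner_self_deriv hab hu hu₁c, integral_inner_deriv_right hab hu hu₂ hu₁c hu₃,
    integral_inner_self_deriv hab hu₁ hu₂c]
  ring

end InnerProduct

theorem ContDiffOn.hasDerivWithinAt_iteratedDerivWithin {𝕜 F : Type*} [NontriviallyNormedField 𝕜]
    [NormedAddCommGroup F] [NormedSpace 𝕜 F] {f : 𝕜 → F} {s : Set 𝕜} {n : WithTop ℕ∞} {m : ℕ}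
    {x : 𝕜} (hf : ContDiffOn 𝕜 n f s) (hmn : m < n) (hs : UniqueDiffOn 𝕜 s) (hx : x ∈ s) :
    HasDerivWithinAt (iteratedDerivWithin m f s) (iteratedDerivWithin (m + 1) f s x) s x := by
  rw [iteratedDerivWithin_succ]
  exact (hf.differentiableOn_iteratedDerivWithin hmn hs x hx).hasDerivWithinAt

theorem Complex.real_inner_mul_self_right (z w : ℂ) : ⟪z, w * z⟫_ℝ = w.re * ‖z‖ ^ 2 := by
  rw [Complex.inner, mul_assoc, Complex.mul_conj, ← Complex.sq_norm]
  exact Complex.re_mul_ofReal _ _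

theorem L_pos : 0 < L := by
  unfold L
  positivity

/-- if φ : [0,L] → ℂ is C³, not identically zero, satisfies
−(φ' + φ''') = λ·φ on [0,L] with φ(0) = φ(L) = 0 and φ'(L) = 0, then
Re(λ)·∫₀^L |φ|² = −(1/2)·|φ'(0)|², and in particular Re(λ) ≤ 0. -/
theorem stmt_6 (lam : ℂ) (φ : ℝ → ℂ)
    (hreg : ContDiffOn ℝ 3 φ (Set.Icc 0 L))
    (hne : ∃ x ∈ Set.Icc (0 : ℝ) L, φ x ≠ 0)
    (hode : ∀ x ∈ Set.Icc (0 : ℝ) L,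
      -(iteratedDerivWithin 1 φ (Set.Icc 0 L) x + iteratedDerivWithin 3 φ (Set.Icc 0 L) x)
        = lam * φ x)
    (h0 : φ 0 = 0) (hL : φ L = 0)
    (hL' : iteratedDerivWithin 1 φ (Set.Icc 0 L) L = 0) :
    lam.re * (∫ x in (0 : ℝ)..L, ‖φ x‖ ^ 2)
      = -(1 / 2) * ‖iteratedDerivWithin 1 φ (Set.Icc 0 L) 0‖ ^ 2 ∧
    lam.re ≤ 0 := by
  have hs : UniqueDiffOn ℝ (Icc 0 L) := uniqueDiffOn_Icc L_pos
  have hderiv (m : ℕ) (hm : m < 3) (x : ℝ) (hx : x ∈ Icc 0 L) :=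
    hreg.hasDerivWithinAt_iteratedDerivWithin (by exact_mod_cast hm) hs hx
  have hφ := hderiv 0 (by norm_num)
  rw [iteratedDerivWithin_zero] at hφ
  have henergy := integral_inner_deriv_add_third_deriv L_pos.le hφ (hderiv 1 (by norm_num))
    (hderiv 2 (by norm_num)) (hreg.continuousOn_iteratedDerivWithin (by norm_num) hs)
  simp only [Nat.reduceAdd, h0, hL, hL', norm_zero, inner_zero_left] at henergy
  have hode_integral : ∫ x in (0 : ℝ)..L,
      ⟪φ x, iteratedDerivWithin 1 φ (Icc 0 L) x + iteratedDerivWithin 3 φ (Icc 0 L) x⟫_ℝ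
        = -(lam.re * ∫ x in (0 : ℝ)..L, ‖φ x‖ ^ 2) := by
    rw [← integral_const_mul, ← integral_neg]
    refine integral_congr fun x hx => ?_
    rw [uIcc_of_le L_pos.le] at hx
    rw [← neg_neg (_ + _), hode x hx, inner_neg_right, Complex.real_inner_mul_self_right]
  have hidentity : lam.re * (∫ x in (0 : ℝ)..L, ‖φ x‖ ^ 2)
      = -(1 / 2) * ‖iteratedDerivWithin 1 φ (Icc 0 L) 0‖ ^ 2 := by linarith
  refine ⟨hidentity, ?_⟩
  obtain ⟨x₀, hx₀, hφx₀⟩ := hne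
  have hmass : 0 < ∫ x in (0 : ℝ)..L, ‖φ x‖ ^ 2 :=
    integral_pos L_pos (hreg.continuousOn.norm.pow 2) (fun _ _ => by positivity)
      ⟨x₀, hx₀, by positivity⟩
  exact nonpos_of_mul_nonpos_left
    (hidentity.trans_le (mul_nonpos_of_nonpos_of_nonneg (by norm_num) (sq_nonneg _))) hmass
end
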